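/- (Optimal order for single-instance computation of Boolean threshold functions.) Let 0 ≤ p_1 ≤ p_2 ≤ … ≤ p_n ≤ 1 and 1 ≤ θ ≤ n, and take the constant cost f ≡ 1 (each transmission costs one bit). Then the index i = n−θ+1 attains the minimum in the recursion: for every j ∈ {1,…,n}, 1 + p_{n−θ+1}·C(θ−1; p_{−(n−θ+1)}) + (1−p_{n−θ+1})·C(θ; p_{−(n−θ+1)}) ≤ 1 + p_j·C(θ−1; p_{−j}) + (1−p_j)·C(θ; p_{−j}), where C = C_f with f ≡ 1. In other words, to compute Π_{n−k}(X_1,…,X_n) it is optimal for node k+1 to transmit its bit first. -/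

import Mathlib

/-- The optimal expected cost `C_f(θ; p)` of sequentially computing the Boolean
threshold function `Π_θ` on independent Bernoulli variables with parameters given by
the list `p`, where querying a node with parameter `q` costs `f q`.
`cost f θ p = 0` if `θ = 0` or `θ > p.length`, and otherwise it is the minimum over
nodes `i` of `f p_i + p_i • cost f (θ-1) p_{-i} + (1 - p_i) • cost f θ p_{-i}`. -/
noncomputable def cost (f : ℝ → ℝ) : ℕ → List ℝ → ℝ
  | 0, _ => 0
  | (θ+1), p =>
      if p.length < θ + 1 then 0
      else ⨅ i : Fin p.length,
        (f (p.get i) + p.get i * cost f θ (p.eraseIdx i.1)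
          + (1 - p.get i) * cost f (θ+1) (p.eraseIdx i.1))
termination_by θ p => p.length
decreasing_by
  all_goals (have h := i.isLt; simp [List.length_eraseIdx, h]; omega)

/-!
With unit costs, let `greedyCost t l` be the expected cost of the strategy that always queries
the `t`-th largest remaining parameter (index `l.length - t` of a sorted list `l`); its first
query is the one in the theorem. It suffices to show that `greedyCost` satisfies the Bellman
inequality `greedyCost (t+1) l ≤ 1 + x * greedyCost t l' + (1 - x) * greedyCost (t+1) l'` for
every entry `x` of `l`, where `l'` is `l` without `x`: then `greedyCost` solves the recursion
defining `cost`.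

`greedyCost` is affine in each entry, so exchanging adjacent entries `x ≤ w` in a branch
changes its value by `(w - x) * (greedyCost t (⋯ 0 ⋯) - greedyCost (t+1) (⋯ 1 ⋯))`, and that
difference is `≤ 0` when the slot lies below the pivot. Moving the queried entry up to the pivot
one exchange at a time proves the Bellman inequality for entries below the pivot. Entries above
it follow by the symmetry `x ↦ 1 - x`, reversing the list and `t ↦ n + 1 - t`.
-/

open Set

theorem List.exists_eq_append_cons_length {α : Type*} {l : List α} {k : ℕ} (h : k < l.length) :
    ∃ P x S, l = P ++ x :: S ∧ S.length = k := by
  refine ⟨l.take (l.length - k - 1), l[l.length - k - 1], l.drop (l.length - k - 1 + 1), ?_, ?_⟩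
  · rw [List.getElem_cons_drop, List.take_append_drop]
  · simp; omega

noncomputable def greedyCost : ℕ → List ℝ → ℝ
  | 0, _ => 0
  | t + 1, l =>
    if h : t + 1 ≤ l.length then
      1 + l[l.length - (t + 1)] * greedyCost t (l.eraseIdx (l.length - (t + 1)))
        + (1 - l[l.length - (t + 1)]) * greedyCost (t + 1) (l.eraseIdx (l.length - (t + 1)))
    else 0
termination_by _ l => l.length
decreasing_by all_goals simp only [List.length_eraseIdx]; split_ifs <;> omega

noncomputable def branchCost (t : ℕ) (x : ℝ) (l : List ℝ) : ℝ :=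
  1 + x * greedyCost t l + (1 - x) * greedyCost (t + 1) l

/-- `Π_t` on `l` is the negation of `Π_{n+1-t}` on `mirror l`, so the greedy strategies for the
two correspond (`mirror_eq`). -/
def mirror (l : List ℝ) : List ℝ := (l.map (1 - ·)).reverse

@[simp] theorem length_mirror (l : List ℝ) : (mirror l).length = l.length := by simp [mirror]

theorem mirror_append (l l' : List ℝ) : mirror (l ++ l') = mirror l' ++ mirror l := by
  simp [mirror]

theorem mirror_append_cons (P : List ℝ) (x : ℝ) (S : List ℝ) :
    mirror (P ++ x :: S) = mirror S ++ (1 - x) :: mirror P := by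
  simp [mirror]

theorem pairwise_mirror {l : List ℝ} (h : l.Pairwise (· ≤ ·)) :
    (mirror l).Pairwise (· ≤ ·) := by
  simp only [mirror, List.pairwise_reverse, List.pairwise_map]
  exact h.imp fun hab => by linarith

theorem forall_mem_Icc_mirror {l : List ℝ} (h : ∀ x ∈ l, x ∈ Icc (0 : ℝ) 1) :
    ∀ x ∈ mirror l, x ∈ Icc (0 : ℝ) 1 := by
  simp only [mirror, List.mem_reverse, List.mem_map, mem_Icc]
  rintro _ ⟨x, hx, rfl⟩
  have := h x hx
  constructor <;> linarith [this.1, this.2]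

namespace greedyCost

@[simp] theorem zero_left (l : List ℝ) : greedyCost 0 l = 0 := by
  rw [greedyCost]

theorem of_length_lt {t : ℕ} {l : List ℝ} (h : l.length < t) : greedyCost t l = 0 := by
  cases t with
  | zero => omega
  | succ t => rw [greedyCost, dif_neg (by omega)]

theorem succ_append_cons {t : ℕ} (P : List ℝ) (x : ℝ) {S : List ℝ} (hS : S.length = t) :
    greedyCost (t + 1) (P ++ x :: S) = branchCost t x (P ++ S) := by
  subst hS
  have hidx : (P ++ x :: S).length - (S.length + 1) = P.length := by simp
  rw [greedyCost, dif_pos (by simp)]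
  simp only [hidx, List.getElem_append_right le_rfl, List.eraseIdx_append_of_length_le le_rfl]
  simp [branchCost]

theorem succ_of_le {t : ℕ} {l : List ℝ} (h : t + 1 ≤ l.length) :
    greedyCost (t + 1) l
      = branchCost t l[l.length - (t + 1)] (l.eraseIdx (l.length - (t + 1))) := by
  rw [greedyCost, dif_pos h, branchCost]

theorem nonneg {t : ℕ} {l : List ℝ} (hl : ∀ x ∈ l, x ∈ Icc (0 : ℝ) 1) :
    0 ≤ greedyCost t l := by
  rcases Nat.lt_or_ge l.length t with h | h
  · rw [of_length_lt h]
  cases t with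
  | zero => simp
  | succ t =>
    obtain ⟨P, x, S, rfl, hS⟩ := List.exists_eq_append_cons_length (k := t) (l := l) (by omega)
    have hPS : ∀ y ∈ P ++ S, y ∈ Icc (0 : ℝ) 1 := fun y hy =>
      hl y (by simp at hy ⊢; tauto)
    have hx := hl x (by simp)
    have h₀ := nonneg (t := t) hPS
    have h₁ := nonneg (t := t + 1) hPS
    rw [succ_append_cons P x hS, branchCost]
    nlinarith [hx.1, hx.2]
termination_by l.length
decreasing_by all_goals (subst_vars; simp)

theorem append_cons_eq_affine (t : ℕ) (C : List ℝ) (x : ℝ) (D : List ℝ) :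
    greedyCost t (C ++ x :: D)
      = (1 - x) * greedyCost t (C ++ 0 :: D) + x * greedyCost t (C ++ 1 :: D) := by
  rcases Nat.lt_or_ge (C.length + D.length + 1) t with h | h
  · have vanish : ∀ y : ℝ, greedyCost t (C ++ y :: D) = 0 := fun y => of_length_lt (by simpa)
    simp [vanish]
  cases t with
  | zero => simp
  | succ t =>
    rcases lt_trichotomy t D.length with hD | hD | hD
    · obtain ⟨D₁, e, D₂, rfl, hD₂⟩ := List.exists_eq_append_cons_length hD
      have split : ∀ y : ℝ, C ++ y :: (D₁ ++ e :: D₂) = (C ++ y :: D₁) ++ e :: D₂ := by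
        simp
      have merge : ∀ y : ℝ, C ++ y :: D₁ ++ D₂ = C ++ y :: (D₁ ++ D₂) := by simp
      simp only [split, succ_append_cons _ e hD₂, merge, branchCost]
      rw [append_cons_eq_affine t C x (D₁ ++ D₂),
        append_cons_eq_affine (t + 1) C x (D₁ ++ D₂)]
      ring
    · simp only [succ_append_cons C _ hD.symm, branchCost]
      ring
    · obtain ⟨C₁, e, C₂, rfl, hC₂⟩ :=
        List.exists_eq_append_cons_length (k := t - D.length - 1) (l := C) (by simp at h; omega)
      have hS : ∀ y : ℝ, (C₂ ++ y :: D).length = t := by simp; omega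
      have split : ∀ y : ℝ, C₁ ++ e :: C₂ ++ y :: D = C₁ ++ e :: (C₂ ++ y :: D) := by
        simp
      have merge : ∀ y : ℝ, C₁ ++ (C₂ ++ y :: D) = C₁ ++ C₂ ++ y :: D := by simp
      simp only [split, succ_append_cons _ e (hS _), merge, branchCost]
      rw [append_cons_eq_affine t (C₁ ++ C₂) x D,
        append_cons_eq_affine (t + 1) (C₁ ++ C₂) x D]
      ring
termination_by C.length + D.length
decreasing_by all_goals (subst_vars; simp)

theorem branchCost_sub_branchCost (t : ℕ) (C : List ℝ) (x y : ℝ) (D : List ℝ) :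
    branchCost t x (C ++ y :: D) - branchCost t y (C ++ x :: D)
      = (x - y) * (greedyCost t (C ++ 0 :: D) - greedyCost (t + 1) (C ++ 1 :: D)) := by
  simp only [branchCost]
  rw [append_cons_eq_affine t C x, append_cons_eq_affine t C y,
    append_cons_eq_affine (t + 1) C x, append_cons_eq_affine (t + 1) C y]
  ring

theorem length_append_zero_cons (A B : List ℝ) :
    greedyCost B.length (A ++ 0 :: B) = 1 + greedyCost B.length (A ++ B) - B.prod := by
  induction B generalizing A with
  | nil => simp
  | cons c B ih =>
    have shift : A ++ 0 :: c :: B = (A ++ [0]) ++ c :: B := by simp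
    rw [List.length_cons, shift, succ_append_cons _ c rfl, List.append_assoc, List.singleton_append,
      succ_append_cons A c rfl]
    simp only [branchCost, ih, succ_append_cons A 0 rfl, List.prod_cons]
    ring

theorem branchCost_le_branchCost {t t' : ℕ} {x : ℝ} {l l' : List ℝ}
    (hx : x ∈ Icc (0 : ℝ) 1) (h₀ : greedyCost t l ≤ greedyCost t' l')
    (h₁ : greedyCost (t + 1) l ≤ greedyCost (t' + 1) l') :
    branchCost t x l ≤ branchCost t' x l' := by
  have : 0 ≤ 1 - x := by linarith [hx.2]
  unfold branchCost
  gcongr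
  exact hx.1

theorem zero_cons_le_one_cons {t : ℕ} {A B : List ℝ}
    (hAB : ∀ x ∈ A ++ B, x ∈ Icc (0 : ℝ) 1)
    (hB : B.Pairwise (· ≤ ·)) (ht : t ≤ B.length) :
    greedyCost t (A ++ 0 :: B) ≤ greedyCost (t + 1) (A ++ 1 :: B) := by
  rcases t with _ | s
  · rw [zero_left]
    exact nonneg (by simpa [or_imp, forall_and] using hAB)
  rcases ht.eq_or_lt with hs | hs
  · rw [hs, length_append_zero_cons, succ_append_cons A 1 rfl, branchCost]
    have : 0 ≤ B.prod := List.prod_nonneg fun x hx => (hAB x (by simp [hx])).1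
    linarith
  obtain ⟨B₁, γ, T, rfl, hT⟩ := List.exists_eq_append_cons_length hs
  obtain ⟨β, B₂, rfl⟩ := List.exists_cons_of_length_eq_add_one hT
  -- the two sides query the adjacent entries `β` and `γ ≤ β` first
  replace hT : B₂.length = s := by simpa using hT
  have hγβ : γ ≤ β := by simp_all [List.pairwise_append]
  have hγ : γ ∈ Icc (0 : ℝ) 1 := hAB γ (by simp)
  have hB' : (B₁ ++ β :: B₂).Pairwise (· ≤ ·) := hB.sublist (by simp)
  have hAB' : ∀ x ∈ A ++ (B₁ ++ β :: B₂), x ∈ Icc (0 : ℝ) 1 := by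
    simp_all [or_imp, forall_and]
  have hAB'' : ∀ x ∈ A ++ 0 :: B₁ ++ B₂, x ∈ Icc (0 : ℝ) 1 := by
    simp_all [or_imp, forall_and]
  have lower := zero_cons_le_one_cons (A := A ++ 0 :: B₁) hAB''
    (List.pairwise_append.1 hB).2.1.of_cons.of_cons hT.ge
  have raise₀ := zero_cons_le_one_cons hAB' hB' (t := s) (by simp; omega)
  have raise₁ := zero_cons_le_one_cons hAB' hB' (t := s + 1) (by simp; omega)
  have exchange := branchCost_sub_branchCost s (A ++ 0 :: B₁) β γ B₂
  calc greedyCost (s + 1) (A ++ 0 :: (B₁ ++ γ :: β :: B₂))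
      = branchCost s β (A ++ 0 :: B₁ ++ γ :: B₂) := by
        simpa using succ_append_cons (A ++ 0 :: B₁ ++ [γ]) β hT
    _ ≤ branchCost s γ (A ++ 0 :: B₁ ++ β :: B₂) := by
        nlinarith [mul_nonpos_of_nonneg_of_nonpos (sub_nonneg.2 hγβ) (sub_nonpos.2 lower)]
    _ ≤ branchCost (s + 1) γ (A ++ 1 :: (B₁ ++ β :: B₂)) := by
        simpa using branchCost_le_branchCost hγ raise₀ raise₁
    _ = greedyCost (s + 1 + 1) (A ++ 1 :: (B₁ ++ γ :: β :: B₂)) := by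
        have hS : (β :: B₂).length = s + 1 := by simpa using hT
        simpa using (succ_append_cons (A ++ 1 :: B₁) γ hS).symm
termination_by A.length + B.length

theorem mirror_eq (t : ℕ) (l : List ℝ) :
    greedyCost (l.length + 1 - t) (mirror l) = greedyCost t l := by
  rcases Nat.lt_or_ge l.length t with h | h
  · rw [of_length_lt h, Nat.sub_eq_zero_of_le h, zero_left]
  rcases t with _ | t
  · rw [zero_left, of_length_lt (by simp)]
  obtain ⟨P, x, S, rfl, hS⟩ := List.exists_eq_append_cons_length (k := t) (l := l) (by omega)
  have ih₀ := mirror_eq t (P ++ S)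
  have ih₁ := mirror_eq (t + 1) (P ++ S)
  rw [mirror_append] at ih₀ ih₁
  rw [mirror_append_cons, succ_append_cons P x hS, List.length_append, List.length_cons,
    show P.length + (S.length + 1) + 1 - (t + 1) = P.length + 1 by omega,
    succ_append_cons _ _ (length_mirror P)]
  rw [List.length_append, show P.length + S.length + 1 - t = P.length + 1 by omega] at ih₀
  rw [List.length_append, show P.length + S.length + 1 - (t + 1) = P.length by omega] at ih₁
  simp only [branchCost, ih₀, ih₁]
  ring
termination_by l.length
decreasing_by all_goals (subst_vars; simp)

theorem le_branchCost_of_le_length {t : ℕ} {P S : List ℝ} {x : ℝ}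
    (hl : ∀ y ∈ P ++ x :: S, y ∈ Icc (0 : ℝ) 1) (hs : (P ++ x :: S).Pairwise (· ≤ ·))
    (ht : t ≤ S.length) :
    greedyCost (t + 1) (P ++ x :: S) ≤ branchCost t x (P ++ S) := by
  rcases ht.eq_or_lt with rfl | ht
  · exact (succ_append_cons P x rfl).le
  obtain ⟨w, S, rfl⟩ : ∃ w S', S = w :: S' := List.exists_cons_of_length_pos (by omega)
  replace ht : t ≤ S.length := by simp at ht; omega
  have hxw : x ≤ w := List.rel_of_pairwise_cons (List.pairwise_append.1 hs).2.1 (by simp)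
  have ih := le_branchCost_of_le_length (P := P ++ [x]) (x := w) (S := S)
    (by simpa using hl) (by simpa using hs) ht
  have lower := zero_cons_le_one_cons (A := P) (B := S) (by simp_all [or_imp, forall_and])
    (List.pairwise_append.1 hs).2.1.of_cons.of_cons ht
  have exchange := branchCost_sub_branchCost t P w x S
  calc greedyCost (t + 1) (P ++ x :: w :: S) ≤ branchCost t w (P ++ x :: S) := by simpa using ih
    _ ≤ branchCost t x (P ++ w :: S) := by
      nlinarith [mul_nonpos_of_nonneg_of_nonpos (sub_nonneg.2 hxw) (sub_nonpos.2 lower)]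
termination_by S.length

theorem le_branchCost_of_length_le {t : ℕ} {P S : List ℝ} {x : ℝ}
    (hl : ∀ y ∈ P ++ x :: S, y ∈ Icc (0 : ℝ) 1) (hs : (P ++ x :: S).Pairwise (· ≤ ·))
    (ht : S.length ≤ t) :
    greedyCost (t + 1) (P ++ x :: S) ≤ branchCost t x (P ++ S) := by
  rcases Nat.lt_or_ge (P.length + S.length) t with h | h
  · simp only [branchCost]
    rw [of_length_lt (by simp; omega), of_length_lt (by simp; omega), of_length_lt (by simp; omega)]
    norm_num
  have hbranch : branchCost t x (P ++ S)
      = branchCost (P.length + S.length - t) (1 - x) (mirror S ++ mirror P) := by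
    rw [branchCost, branchCost, ← mirror_eq t (P ++ S), ← mirror_eq (t + 1) (P ++ S),
      mirror_append, List.length_append,
      show P.length + S.length + 1 - t = P.length + S.length - t + 1 by omega,
      show P.length + S.length + 1 - (t + 1) = P.length + S.length - t by omega]
    ring
  rw [hbranch, ← mirror_eq (t + 1) (P ++ x :: S), mirror_append_cons, List.length_append,
    List.length_cons,
    show P.length + (S.length + 1) + 1 - (t + 1) = P.length + S.length - t + 1 by omega]
  refine le_branchCost_of_le_length ?_ ?_ (by simp; omega)
  · simpa [mirror_append_cons] using forall_mem_Icc_mirror hl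
  · simpa [mirror_append_cons] using pairwise_mirror hs

theorem le_branchCost {t : ℕ} {P S : List ℝ} {x : ℝ}
    (hl : ∀ y ∈ P ++ x :: S, y ∈ Icc (0 : ℝ) 1) (hs : (P ++ x :: S).Pairwise (· ≤ ·)) :
    greedyCost (t + 1) (P ++ x :: S) ≤ branchCost t x (P ++ S) :=
  (le_total t S.length).elim (le_branchCost_of_le_length hl hs) (le_branchCost_of_length_le hl hs)

theorem le_branchCost_getElem {l : List ℝ} (hl : ∀ y ∈ l, y ∈ Icc (0 : ℝ) 1)
    (hs : l.Pairwise (· ≤ ·)) (t i : ℕ) (hi : i < l.length) :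
    greedyCost (t + 1) l ≤ branchCost t l[i] (l.eraseIdx i) := by
  have hsplit : l = l.take i ++ l[i] :: l.drop (i + 1) := by
    rw [List.getElem_cons_drop, List.take_append_drop]
  rw [List.eraseIdx_eq_take_drop_succ]
  conv_lhs => rw [hsplit]
  exact le_branchCost (by rwa [← hsplit]) (by rwa [← hsplit])

end greedyCost

open greedyCost in
theorem cost_eq_greedyCost {l : List ℝ} (hl : ∀ y ∈ l, y ∈ Icc (0 : ℝ) 1)
    (hs : l.Pairwise (· ≤ ·)) (t : ℕ) : cost (fun _ => 1) t l = greedyCost t l := by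
  rcases t with _ | t
  · rw [cost, zero_left]
  by_cases h : l.length < t + 1
  · rw [cost, if_pos h, of_length_lt h]
  have hbranch : ∀ i : Fin l.length,
      (fun _ => (1 : ℝ)) (l.get i) + l.get i * cost (fun _ => 1) t (l.eraseIdx i)
        + (1 - l.get i) * cost (fun _ => 1) (t + 1) (l.eraseIdx i)
      = branchCost t l[i] (l.eraseIdx i) := by
    intro i
    have hsub := List.eraseIdx_sublist l i
    have hl' : ∀ y ∈ l.eraseIdx i, y ∈ Icc (0 : ℝ) 1 := fun y hy => hl y (hsub.subset hy)
    rw [cost_eq_greedyCost hl' (hs.sublist hsub), cost_eq_greedyCost hl' (hs.sublist hsub)]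
    rfl
  have : Nonempty (Fin l.length) := ⟨⟨0, by omega⟩⟩
  rw [cost, if_neg h, iInf_congr hbranch]
  refine le_antisymm ?_ (le_ciInf fun i => le_branchCost_getElem hl hs t i i.isLt)
  rw [succ_of_le (by omega)]
  exact ciInf_le (Set.finite_range _).bddBelow (⟨l.length - (t + 1), by omega⟩ : Fin l.length)
termination_by l.length
decreasing_by all_goals (rw [List.length_eraseIdx_of_lt i.isLt]; omega)

/-- Theorem (single-instance computation of Boolean threshold functions):
with constant cost `f ≡ 1` (one bit per transmission) and sorted probabilities
`p_1 ≤ … ≤ p_n`, the 1-based index `n - θ + 1` (0-based index `n - θ`) attains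
the minimum in the DP recursion for computing `Π_θ`; i.e. to compute
`Π_{n-k}(X_1,…,X_n)` it is optimal for node `k+1` to transmit first. -/
theorem stmt_5 (n : ℕ) (p : Fin n → ℝ)
    (hp0 : ∀ i, 0 ≤ p i) (hp1 : ∀ i, p i ≤ 1) (hsorted : Monotone p)
    (θ : ℕ) (hθ1 : 1 ≤ θ) (hθn : θ ≤ n) (j : Fin n) :
    1 + p ⟨n - θ, by omega⟩ *
        cost (fun _ => 1) (θ - 1) ((List.ofFn p).eraseIdx (n - θ))
      + (1 - p ⟨n - θ, by omega⟩) *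
        cost (fun _ => 1) θ ((List.ofFn p).eraseIdx (n - θ))
    ≤ 1 + p j * cost (fun _ => 1) (θ - 1) ((List.ofFn p).eraseIdx j)
      + (1 - p j) * cost (fun _ => 1) θ ((List.ofFn p).eraseIdx j) := by
  obtain ⟨t, rfl⟩ : ∃ t, θ = t + 1 := ⟨θ - 1, by omega⟩
  have hl : ∀ x ∈ List.ofFn p, x ∈ Icc (0 : ℝ) 1 := by
    simpa [List.mem_ofFn] using fun i => And.intro (hp0 i) (hp1 i)
  have hs : (List.ofFn p).Pairwise (· ≤ ·) := List.pairwise_ofFn.2 fun _ _ hij => hsorted hij.le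
  have hcost (k s : ℕ) : cost (fun _ => 1) s ((List.ofFn p).eraseIdx k)
      = greedyCost s ((List.ofFn p).eraseIdx k) := by
    have hsub := List.eraseIdx_sublist (List.ofFn p) k
    exact cost_eq_greedyCost (fun y hy => hl y (hsub.subset hy)) (hs.sublist hsub) s
  simp only [hcost, add_tsub_cancel_right]
  calc _ = greedyCost (t + 1) (List.ofFn p) := by
        rw [greedyCost.succ_of_le (l := List.ofFn p) (by simpa)]; simp [branchCost]
    _ ≤ _ := by simpa [branchCost] using greedyCost.le_branchCost_getElem hl hs t j (by simp)
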